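/- In the MAX-3-SAT shopping instance, for each variable i the shopper cannot simultaneously obtain the discount at shop tᵢ and at shop fᵢ; consequently the total discount of any purchase plan is at most 2n + m. -/

import Mathlib

/-!
A variable shop `(v, sgn)` sells only the two clause books carrying the literal `(v, sgn)` and
the common book `x_v`, so reaching its threshold 3 forces all three to be bought there, `x_v`
included. Since `x_v` is bought only once, at most one of the two shops of `v` gives its
discount 2; together with at most 1 from each of the `m` clause shops this gives `2n + m`.
-/

open Finset

theorem eq_of_mem_of_card_le_card_fiber {β σ : Type*} [Fintype β] [DecidableEq σ]
    {g : β → σ} {s : σ} {S : Finset β} (hsub : ({b | g b = s} : Finset β) ⊆ S)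
    (hcard : #S ≤ #{b | g b = s}) {b : β} (hb : b ∈ S) : g b = s := by
  rw [← eq_of_subset_of_card_le hsub hcard] at hb
  simpa using hb

theorem card_filter_le_of_not_true_and_false {α : Type*} [Fintype α] (P : α × Bool → Prop)
    [DecidablePred P] (h : ∀ a, ¬(P (a, true) ∧ P (a, false))) :
    #{p | P p} ≤ Fintype.card α := by
  refine card_le_card_of_injOn Prod.fst (fun _ _ => mem_univ _) ?_
  rintro ⟨a, x⟩ hx ⟨a', y⟩ hy (rfl : a = a')
  simp only [coe_filter, mem_univ, true_and, Set.mem_ofPred_eq] at hx hy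
  cases x <;> cases y <;> tauto

namespace ShoppingMaxSat

variable {n m : ℕ}

/- `.inl (i, j)` is the book of the `j`-th literal of clause `i`, `.inr v` the common book `x_v`;
`.inl i` is the clause shop `C_i`, `.inr (v, true)` and `.inr (v, false)` are `t_v` and `f_v`. -/
abbrev Book (n m : ℕ) := (Fin m × Fin 3) ⊕ Fin n

abbrev Shop (n m : ℕ) := Fin m ⊕ (Fin n × Bool)

def Sells (clauses : Fin m → Fin 3 → Fin n × Bool) : Shop n m → Book n m → Prop
  | .inl i, .inl (i', _) => i' = i
  | .inl _, .inr _ => False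
  | .inr (v, sgn), .inl (i, j) => clauses i j = (v, sgn)
  | .inr (v, _), .inr v' => v' = v

def discount : Shop n m → ℕ := Sum.elim (fun _ => 1) (fun _ => 2)

def threshold : Shop n m → ℕ := Sum.elim (fun _ => 1) (fun _ => 3)

def literalBooks (clauses : Fin m → Fin 3 → Fin n × Bool) (v : Fin n) (sgn : Bool) :
    Finset (Book n m) :=
  ({p | clauses p.1 p.2 = (v, sgn)} : Finset (Fin m × Fin 3)).image Sum.inl

def count (g : Book n m → Shop n m) (s : Shop n m) : ℕ := #{b | g b = s}

theorem fiber_subset_of_sells {clauses : Fin m → Fin 3 → Fin n × Bool}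
    {g : Book n m → Shop n m} (hg : ∀ b, Sells clauses (g b) b) (v : Fin n) (sgn : Bool) :
    ({b | g b = .inr (v, sgn)} : Finset (Book n m)) ⊆
      literalBooks clauses v sgn ∪ {Sum.inr v} := by
  intro b hb
  have hsells := hg b
  rw [(mem_filter.mp hb).2] at hsells
  rcases b with ⟨i, j⟩ | v'
  · exact mem_union_left _ (mem_image_of_mem _ (mem_filter.mpr ⟨mem_univ _, hsells⟩))
  · exact mem_union_right _ (mem_singleton.mpr (congrArg Sum.inr hsells))

theorem common_book_at_shop_of_threshold_le {clauses : Fin m → Fin 3 → Fin n × Bool}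
    {g : Book n m → Shop n m} (hg : ∀ b, Sells clauses (g b) b) {v : Fin n} {sgn : Bool}
    (hlit : #{p : Fin m × Fin 3 | clauses p.1 p.2 = (v, sgn)} ≤ 2)
    (h : threshold (.inr (v, sgn) : Shop n m) ≤ count g (.inr (v, sgn))) :
    g (.inr v) = .inr (v, sgn) := by
  refine eq_of_mem_of_card_le_card_fiber (fiber_subset_of_sells hg v sgn) ?_
    (mem_union_right _ (mem_singleton_self _))
  calc _ ≤ #(literalBooks clauses v sgn) + 1 := card_union_le _ _
    _ ≤ 3 := by grw [literalBooks, card_image_le, hlit]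
    _ ≤ _ := h

theorem not_threshold_le_true_and_false {clauses : Fin m → Fin 3 → Fin n × Bool}
    {g : Book n m → Shop n m} (hg : ∀ b, Sells clauses (g b) b)
    (hlit : ∀ (v : Fin n) (sgn : Bool),
      #{p : Fin m × Fin 3 | clauses p.1 p.2 = (v, sgn)} ≤ 2) (v : Fin n) :
    ¬(threshold (.inr (v, true) : Shop n m) ≤ count g (.inr (v, true)) ∧
      threshold (.inr (v, false) : Shop n m) ≤ count g (.inr (v, false))) := fun ⟨ht, hf⟩ => by
  have := (common_book_at_shop_of_threshold_le hg (hlit v true) ht).symm.trans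
    (common_book_at_shop_of_threshold_le hg (hlit v false) hf)
  simp at this

theorem sum_discount_le (P : Shop n m → Prop) [DecidablePred P]
    (h : ∀ v, ¬(P (.inr (v, true)) ∧ P (.inr (v, false)))) :
    ∑ s ∈ {s | P s}, discount s ≤ 2 * n + m := by
  rw [sum_filter, Fintype.sum_sum_type]
  have hclause : ∑ i : Fin m, (if P (.inl i) then discount (.inl i : Shop n m) else 0) ≤ m := by
    calc _ ≤ ∑ _i : Fin m, 1 := sum_le_sum fun i _ => by split <;> simp [discount]
      _ = m := by simp
  have hvar :
      ∑ p : Fin n × Bool, (if P (.inr p) then discount (.inr p : Shop n m) else 0) ≤ 2 * n := by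
    calc _ = 2 * #{p : Fin n × Bool | P (.inr p)} := by
          simp [← sum_filter, discount, mul_comm]
      _ ≤ 2 * n := by
          grw [card_filter_le_of_not_true_and_false (fun p => P (.inr p)) h, Fintype.card_fin]
  omega

end ShoppingMaxSat

open ShoppingMaxSat in
/-- MAX-3-SAT reduction, discount upper bound: for every purchase plan, for
each variable `v` the shopper cannot obtain the discount at both `t_v` and
`f_v` (they share the book `x_v`), and hence the total discount is at most
`2n + m`. Construction as in the reduction: clause shops with discount 1 at
threshold 1, variable shops with discount 2 at threshold 3, unit prices. -/
theorem stmt_12 {n m : ℕ} (clauses : Fin m → Fin 3 → Fin n × Bool)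
    (hlit : ∀ (v : Fin n) (sgn : Bool),
      (Finset.univ.filter (fun p : Fin m × Fin 3 => clauses p.1 p.2 = (v, sgn))).card = 2) :
    let Book := (Fin m × Fin 3) ⊕ Fin n
    let Shop := Fin m ⊕ (Fin n × Bool)
    let sells : Shop → Book → Prop := fun s b =>
      match s, b with
      | .inl i, .inl (i', _) => i' = i
      | .inl _, .inr _ => False
      | .inr (v, sgn), .inl (i, j) => clauses i j = (v, sgn)
      | .inr (v, _), .inr v' => v' = v
    let dshop : Shop → ℕ := Sum.elim (fun _ => 1) (fun _ => 2)
    let tshop : Shop → ℕ := Sum.elim (fun _ => 1) (fun _ => 3)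
    let cnt : (Book → Shop) → Shop → ℕ := fun g s =>
      (Finset.univ.filter (fun b : Book => g b = s)).card
    ∀ g : Book → Shop, (∀ b, sells (g b) b) →
      (∀ v : Fin n,
        ¬(tshop (.inr (v, true)) ≤ cnt g (.inr (v, true)) ∧
          tshop (.inr (v, false)) ≤ cnt g (.inr (v, false)))) ∧
      ∑ s ∈ Finset.univ.filter (fun s : Shop => tshop s ≤ cnt g s), dshop s
        ≤ 2 * n + m := by
  intro _ _ _ _ _ _ g hg
  have hexcl := not_threshold_le_true_and_false hg (fun v sgn => (hlit v sgn).le)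
  exact ⟨hexcl, sum_discount_le (fun s => threshold s ≤ count g s) hexcl⟩
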